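/- arXiv:1306.1926 — 2 statements merged into one kernel-verified Lean document; each statement's English description precedes it below -/
import Mathlib

section
/- Let X be a minimum weight basis of M among all bases contained in E₀, and let A ⊆ E \ E₀. Then there exists a basis Y of M with Y ⊆ E₀ ∪ A, w(Y) = f(A), and Y ⊆ X ∪ A; that is, some minimum weight basis of the restriction of M to E₀ ∪ A is contained in X ∪ A. -/
open Set

variable {α : Type*}

/-- The total weight of a set of elements. -/
noncomputable def setWeight (w : α → ℝ) (X : Set α) : ℝ := ∑ᶠ e ∈ X, w e

/-- `f(A)`: the minimum weight of a basis of `M` contained in `E₀ ∪ A`. -/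
noncomputable def minBasisWeight (M : Matroid α) (w : α → ℝ) (E₀ A : Set α) : ℝ :=
  sInf {r : ℝ | ∃ X, M.IsBase X ∧ X ⊆ E₀ ∪ A ∧ setWeight w X = r}

private lemma setWeight_exchange (w : α → ℝ) {Y : Set α} (hY : Y.Finite) {e f : α}
    (he : e ∈ Y) (hf : f ∉ Y) :
    setWeight w (insert f (Y \ {e})) = setWeight w Y - w e + w f := by
  have h1 : setWeight w (insert f (Y \ {e})) = w f + setWeight w (Y \ {e}) :=
    finsum_mem_insert w (fun h => hf h.1) (hY.diff)
  have h2 : setWeight w Y = w e + setWeight w (Y \ {e}) := by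
    conv_lhs => rw [show Y = insert e (Y \ {e}) from
      (insert_diff_singleton.trans (insert_eq_self.2 he)).symm]
    exact finsum_mem_insert w (fun h => h.2 rfl) (hY.diff)
  rw [h1, h2]; ring

/-- Strong (symmetric) basis exchange, for finite matroids. -/
private lemma base_strong_exchange (M : Matroid α) [M.Finite] {B₁ B₂ : Set α}
    (h₁ : M.IsBase B₁) (h₂ : M.IsBase B₂) {e : α} (heB₁ : e ∈ B₁) (heB₂ : e ∉ B₂) :
    ∃ f ∈ B₂ \ B₁, M.IsBase (insert f (B₁ \ {e})) ∧ M.IsBase (insert e (B₂ \ {f})) := by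
  have heE : e ∈ M.E := h₁.subset_ground heB₁
  have hB₂fin : B₂.Finite := M.ground_finite.subset h₂.subset_ground
  set 𝒮 : Set (Set α) := {S | S ⊆ B₂ ∧ e ∈ M.closure S} with h𝒮
  have hB₂𝒮 : B₂ ∈ 𝒮 := ⟨Subset.rfl, by rw [h₂.closure_eq]; exact heE⟩
  obtain ⟨S, hS𝒮, hSmin⟩ := Set.Finite.exists_minimalFor Set.ncard 𝒮
    (hB₂fin.finite_subsets.subset (fun T hT => hT.1)) ⟨B₂, hB₂𝒮⟩
  have hSfin : S.Finite := hB₂fin.subset hS𝒮.1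
  -- for any f ∈ S, removing f from S loses e from the closure
  have hmin : ∀ f ∈ S, e ∉ M.closure (S \ {f}) := by
    intro f hf hecl
    have hlt : (S \ {f}).ncard < S.ncard := Set.ncard_diff_singleton_lt_of_mem hf hSfin
    have := hSmin (j := S \ {f}) ⟨(diff_subset).trans hS𝒮.1, hecl⟩ hlt.le
    omega
  -- for any f ∈ S, `insert e (B₂ \ {f})` is a base
  have hkey : ∀ f ∈ S, M.IsBase (insert e (B₂ \ {f})) := by
    intro f hf
    have hfB₂ : f ∈ B₂ := hS𝒮.1 hf
    have he_not : e ∉ M.closure (B₂ \ {f}) := by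
      intro hecl
      have h1 : e ∈ M.closure (insert f (S \ {f})) := by
        rw [insert_diff_singleton, insert_eq_self.2 hf]; exact hS𝒮.2
      have h3 := M.closure_exchange ⟨h1, hmin f hf⟩
      have h4 : f ∈ M.closure (insert e (B₂ \ {f})) :=
        M.closure_subset_closure (insert_subset_insert (diff_subset_diff_left hS𝒮.1)) h3.1
      rw [Matroid.closure_insert_eq_of_mem_closure hecl] at h4
      exact h₂.indep.notMem_closure_diff_of_mem hfB₂ h4
    have hind : M.Indep (insert e (B₂ \ {f})) :=
      ((h₂.indep.diff {f}).insert_indep_iff_of_notMem (fun h => heB₂ h.1)).2 ⟨heE, he_not⟩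
    exact h₂.exchange_isBase_of_indep heB₂ hind
  -- find f ∈ S outside the closure of B₁ \ {e}
  have hex : ∃ f ∈ S, f ∉ M.closure (B₁ \ {e}) := by
    by_contra h
    push_neg at h
    have : e ∈ M.closure (B₁ \ {e}) :=
      M.closure_subset_closure_of_subset_closure h hS𝒮.2
    exact h₁.indep.notMem_closure_diff_of_mem heB₁ this
  obtain ⟨f, hfS, hfcl⟩ := hex
  have hfB₂ : f ∈ B₂ := hS𝒮.1 hfS
  have hfB₁ : f ∉ B₁ := by
    intro hfB₁
    have hne : f ≠ e := fun h => heB₂ (h ▸ hfB₂)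
    exact hfcl (M.subset_closure (B₁ \ {e})
      ((diff_subset).trans h₁.subset_ground) ⟨hfB₁, hne⟩)
  have hind : M.Indep (insert f (B₁ \ {e})) :=
    ((h₁.indep.diff {e}).insert_indep_iff_of_notMem (fun h => hfB₁ h.1)).2
      ⟨h₂.subset_ground hfB₂, hfcl⟩
  exact ⟨f, ⟨hfB₂, hfB₁⟩, h₁.exchange_isBase_of_indep hfB₁ hind, hkey f hfS⟩

/-- If `X` is a minimum weight basis of `M` among all bases contained in `E₀`, and
`A ⊆ E \ E₀`, then some minimum weight basis of the restriction of `M` to `E₀ ∪ A`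
is contained in `X ∪ A`. -/
theorem min_basis_within_old_basis_union (M : Matroid α) [M.Finite] (w : α → ℝ)
    (E₀ : Set α) (hE₀ : E₀ ⊆ M.E) (X : Set α) (hX : M.IsBase X) (hXE₀ : X ⊆ E₀)
    (hXmin : ∀ Z, M.IsBase Z → Z ⊆ E₀ → setWeight w X ≤ setWeight w Z)
    (A : Set α) (hA : A ⊆ M.E \ E₀) :
    ∃ Y, M.IsBase Y ∧ Y ⊆ E₀ ∪ A ∧ setWeight w Y = minBasisWeight M w E₀ A ∧
      Y ⊆ X ∪ A := by
  set R : Set ℝ := {r : ℝ | ∃ Z, M.IsBase Z ∧ Z ⊆ E₀ ∪ A ∧ setWeight w Z = r} with hR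
  have hRfin : R.Finite := by
    have : R ⊆ setWeight w '' {Z | Z ⊆ M.E} := by
      rintro r ⟨Z, hZ, _, rfl⟩
      exact ⟨Z, hZ.subset_ground, rfl⟩
    exact ((M.ground_finite.finite_subsets).image _).subset this
  have hXR : setWeight w X ∈ R := ⟨X, hX, hXE₀.trans subset_union_left, rfl⟩
  have hRne : R.Nonempty := ⟨_, hXR⟩
  have hInf : minBasisWeight M w E₀ A ∈ R := hRne.csInf_mem hRfin
  have hInfle : ∀ r ∈ R, minBasisWeight M w E₀ A ≤ r := fun r hr =>
    csInf_le hRfin.bddBelow hr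
  obtain ⟨Y₀, hY₀, hY₀sub, hY₀w⟩ := hInf
  have hXfin : X.Finite := M.ground_finite.subset hX.subset_ground
  -- strong induction on the number of elements of Y outside X ∪ A
  have key : ∀ n : ℕ, ∀ Y, M.IsBase Y → Y ⊆ E₀ ∪ A →
      setWeight w Y = minBasisWeight M w E₀ A → (Y \ (X ∪ A)).ncard = n →
      ∃ Y', M.IsBase Y' ∧ Y' ⊆ E₀ ∪ A ∧ setWeight w Y' = minBasisWeight M w E₀ A ∧
        Y' ⊆ X ∪ A := by
    intro n
    induction n using Nat.strong_induction_on with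
    | _ n ih =>
      intro Y hY hYsub hYw hcard
      by_cases hYX : Y ⊆ X ∪ A
      · exact ⟨Y, hY, hYsub, hYw, hYX⟩
      obtain ⟨e, heY, heXA⟩ := not_subset.1 hYX
      have heX : e ∉ X := fun h => heXA (Or.inl h)
      have heA : e ∉ A := fun h => heXA (Or.inr h)
      have heE₀ : e ∈ E₀ := (hYsub heY).resolve_right heA
      have hYfin : Y.Finite := M.ground_finite.subset hY.subset_ground
      obtain ⟨f, ⟨hfX, hfY⟩, hY', hX'⟩ := base_strong_exchange M hY hX heY heX
      -- weight comparison using minimality of X over E₀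
      have hX'sub : insert e (X \ {f}) ⊆ E₀ :=
        insert_subset heE₀ ((diff_subset).trans hXE₀)
      have hX'w : setWeight w (insert e (X \ {f})) = setWeight w X - w f + w e :=
        setWeight_exchange w hXfin hfX heX
      have hwfe : w f ≤ w e := by
        have := hXmin _ hX' hX'sub
        rw [hX'w] at this
        linarith
      -- the exchanged base Y'
      have hY'sub : insert f (Y \ {e}) ⊆ E₀ ∪ A :=
        insert_subset (Or.inl (hXE₀ hfX)) ((diff_subset).trans hYsub)
      have hY'w : setWeight w (insert f (Y \ {e})) = setWeight w Y - w e + w f :=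
        setWeight_exchange w hYfin heY hfY
      have hY'min : setWeight w (insert f (Y \ {e})) = minBasisWeight M w E₀ A := by
        have hle : setWeight w (insert f (Y \ {e})) ≤ minBasisWeight M w E₀ A := by
          rw [hY'w, ← hYw]; linarith
        have hge := hInfle _ ⟨_, hY', hY'sub, rfl⟩
        linarith
      -- the count drops
      have hset : insert f (Y \ {e}) \ (X ∪ A) = (Y \ (X ∪ A)) \ {e} := by
        have hfXA : f ∈ X ∪ A := Or.inl hfX
        rw [insert_diff_of_mem _ hfXA, diff_diff_comm]
      have hlt : (insert f (Y \ {e}) \ (X ∪ A)).ncard < n := by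
        rw [hset, ← hcard]
        exact Set.ncard_diff_singleton_lt_of_mem ⟨heY, heXA⟩ (hYfin.diff)
      exact ih _ hlt _ hY' hY'sub hY'min rfl
  exact key _ Y₀ hY₀ hY₀sub hY₀w rfl
end

section
/- The sequence (F_t) is strictly decreasing until it reaches the optimal value and constant afterwards: there exists t ≤ min{rk(M), T} such that F_0 > F_1 > ⋯ > F_t = F_{t+1} = ⋯ = F_T, and F_T equals the minimum weight w* of a basis of M. -/
open Set

variable {α : Type*}

/-- `F t`: the minimum of `f(A)` over all `A ⊆ E \ E₀` with `|A| = t`. -/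
noncomputable def stageLowerBound (M : Matroid α) (w : α → ℝ) (E₀ : Set α) (t : ℕ) : ℝ :=
  sInf {r : ℝ | ∃ A, A ⊆ M.E \ E₀ ∧ A.ncard = t ∧ minBasisWeight M w E₀ A = r}

lemma setWeight_eq_sum (w : α → ℝ) {X : Set α} (hX : X.Finite) :
    setWeight w X = ∑ x ∈ hX.toFinset, w x := by
  rw [setWeight, ← finsum_mem_coe_finset, hX.coe_toFinset]

open scoped Classical in
lemma setWeight_insert (w : α → ℝ) {X : Set α} (hX : X.Finite) {f : α} (hf : f ∉ X) :
    setWeight w (insert f X) = setWeight w X + w f := by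
  rw [setWeight_eq_sum w (hX.insert f), setWeight_eq_sum w hX]
  rw [Set.Finite.toFinset_insert]
  rw [Finset.sum_insert (by simpa using hf)]
  ring

open scoped Classical in
lemma setWeight_diff (w : α → ℝ) {X : Set α} (hX : X.Finite) {e : α} (he : e ∈ X) :
    setWeight w (X \ {e}) = setWeight w X - w e := by
  rw [setWeight_eq_sum w (hX.diff (t := {e})), setWeight_eq_sum w hX]
  have : (hX.diff (t := {e})).toFinset = hX.toFinset.erase e := by
    ext x; simp [and_comm]
  rw [this, eq_sub_iff_add_eq, Finset.sum_erase_add _ _ (by simpa using he)]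

lemma setWeight_swap (w : α → ℝ) {X : Set α} (hX : X.Finite) {e f : α}
    (he : e ∈ X) (hf : f ∉ X) :
    setWeight w (insert f (X \ {e})) = setWeight w X - w e + w f := by
  rw [setWeight_insert w (hX.diff (t := {e})) (by simp [hf]), setWeight_diff w hX he]

/-- attainment of sInf over weights of a finite family -/
lemma weight_sInf_attained (M : Matroid α) [M.Finite] (w : α → ℝ) (P : Set α → Prop)
    (hP : ∀ X, P X → X ⊆ M.E) (hne : ∃ X, P X) :
    (∃ X, P X ∧ setWeight w X = sInf {x : ℝ | ∃ X, P X ∧ setWeight w X = x}) ∧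
    (∀ Y, P Y → sInf {x : ℝ | ∃ X, P X ∧ setWeight w X = x} ≤ setWeight w Y) := by
  have hset : {x : ℝ | ∃ X, P X ∧ setWeight w X = x} = setWeight w '' {X | P X} := by
    ext x; simp [Set.image, eq_comm]
  have hfin : ({x : ℝ | ∃ X, P X ∧ setWeight w X = x}).Finite := by
    rw [hset]
    exact ((M.ground_finite.finite_subsets).subset (fun X hX => hP X hX)).image _
  obtain ⟨X₀, hX₀⟩ := hne
  have hne' : ({x : ℝ | ∃ X, P X ∧ setWeight w X = x}).Nonempty := ⟨_, X₀, hX₀, rfl⟩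
  constructor
  · obtain ⟨X, hX, hXe⟩ := hne'.csInf_mem hfin
    exact ⟨X, hX, hXe⟩
  · intro Y hY
    exact csInf_le hfin.bddBelow ⟨Y, hY, rfl⟩
lemma base_symm_exchange (M : Matroid α) [M.Finite] {B₁ B₂ : Set α}
    (h₁ : M.IsBase B₁) (h₂ : M.IsBase B₂) {e : α} (he : e ∈ B₁ \ B₂) :
    ∃ f ∈ B₂ \ B₁, M.IsBase (insert f (B₁ \ {e})) ∧ M.IsBase (insert e (B₂ \ {f})) := by
  obtain ⟨heB₁, heB₂⟩ := he
  have heE : e ∈ M.E := h₁.subset_ground heB₁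
  have hcl1 : e ∉ M.closure (B₁ \ {e}) := h₁.indep.notMem_closure_diff_of_mem heB₁
  -- D = the fundamental "circuit" elements
  set D : Set α := {f | f ∈ B₂ ∧ e ∉ M.closure (B₂ \ {f})} with hD
  -- a minimal subset C of B₂ spanning e
  have hB₂fin : B₂.Finite := M.ground_finite.subset h₂.subset_ground
  set 𝒞 : Set (Set α) := {C | C ⊆ B₂ ∧ e ∈ M.closure C} with h𝒞
  have h𝒞fin : 𝒞.Finite := (hB₂fin.finite_subsets).subset (fun C hC => hC.1)
  have h𝒞ne : 𝒞.Nonempty := ⟨B₂, subset_rfl, by rw [h₂.closure_eq]; exact heE⟩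
  obtain ⟨C, hC, hCmin⟩ : ∃ C ∈ 𝒞, ∀ C' ∈ 𝒞, id C' ≤ id C → id C = id C' := by
    obtain ⟨C, hC, hmin⟩ := Set.Finite.exists_minimalFor id 𝒞 h𝒞fin h𝒞ne
    exact ⟨C, hC, fun C' hC' hle => le_antisymm (hmin hC' hle) hle⟩
  simp only [id] at hCmin
  -- C ⊆ D
  have hCD : C ⊆ D := by
    intro f hfC
    refine ⟨hC.1 hfC, fun hecl => ?_⟩
    -- e ∈ cl(B₂ \ {f}) gives contradiction with minimality
    have hnot : e ∉ M.closure (C \ {f}) := by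
      intro hmem
      have hEq : C = C \ {f} := hCmin (C \ {f}) ⟨diff_subset.trans hC.1, hmem⟩ diff_subset
      exact (hEq ▸ hfC).2 rfl
    have hex : e ∈ M.closure (insert f (C \ {f})) \ M.closure (C \ {f}) := by
      rw [insert_diff_singleton, insert_eq_of_mem hfC]
      exact ⟨hC.2, hnot⟩
    have hf' : f ∈ M.closure (insert e (C \ {f})) := (Matroid.closure_exchange hex).1
    have hsub : M.closure (insert e (C \ {f})) ⊆ M.closure (B₂ \ {f}) := by
      have h1 : M.closure (insert e (C \ {f})) ⊆ M.closure (insert e (B₂ \ {f})) :=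
        M.closure_subset_closure (insert_subset_insert (diff_subset_diff_left hC.1))
      rwa [Matroid.closure_insert_eq_of_mem_closure hecl] at h1
    exact h₂.indep.notMem_closure_diff_of_mem (hC.1 hfC) (hsub hf')
  have heD : e ∈ M.closure D := M.closure_subset_closure hCD hC.2
  -- find f ∈ D outside cl(B₁ \ {e})
  have hnotsub : ¬ D ⊆ M.closure (B₁ \ {e}) := by
    intro hsub
    exact hcl1 (by
      have := M.closure_subset_closure hsub
      rw [Matroid.closure_closure] at this
      exact this heD)
  obtain ⟨f, hfD, hfcl⟩ := not_subset.1 hnotsub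
  have hfB₂ : f ∈ B₂ := hfD.1
  have hfB₁ : f ∉ B₁ := by
    intro hfB₁
    have hfne : f ≠ e := fun h => heB₂ (h ▸ hfB₂)
    exact hfcl (M.subset_closure (B₁ \ {e}) (diff_subset.trans h₁.subset_ground) ⟨hfB₁, hfne⟩)
  refine ⟨f, ⟨hfB₂, hfB₁⟩, ?_, ?_⟩
  · -- insert f (B₁ \ {e}) is a base
    have hind : M.Indep (insert f (B₁ \ {e})) := by
      rw [(h₁.indep.diff {e}).insert_indep_iff]
      exact Or.inl ⟨h₂.subset_ground hfB₂, hfcl⟩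
    exact h₁.exchange_isBase_of_indep hfB₁ hind
  · -- insert e (B₂ \ {f}) is a base
    have hind : M.Indep (insert e (B₂ \ {f})) := by
      rw [(h₂.indep.diff {f}).insert_indep_iff]
      exact Or.inl ⟨heE, hfD.2⟩
    exact h₂.exchange_isBase_of_indep heB₂ hind

lemma base_finite' (M : Matroid α) [M.Finite] {B : Set α} (hB : M.IsBase B) : B.Finite :=
  M.ground_finite.subset hB.subset_ground

/-- If some base is strictly lighter than `X`, then a single swap improves `X`. -/
lemma exists_improving_swap (M : Matroid α) [M.Finite] (w : α → ℝ) {X : Set α} (hX : M.IsBase X)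
    {Z : Set α} (hZ : M.IsBase Z) (hw : setWeight w Z < setWeight w X) :
    ∃ e ∈ X, ∃ f, f ∉ X ∧ M.IsBase (insert f (X \ {e})) ∧
      setWeight w (insert f (X \ {e})) < setWeight w X := by
  have hXfin := base_finite' M hX
  have main : ∀ n : ℕ, ∀ Z : Set α, M.IsBase Z → (Z \ X).ncard = n →
      setWeight w Z < setWeight w X →
      ∃ e ∈ X, ∃ f, f ∉ X ∧ M.IsBase (insert f (X \ {e})) ∧
        setWeight w (insert f (X \ {e})) < setWeight w X := by
    intro n
    induction n using Nat.strong_induction_on with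
    | _ n ih =>
      intro Z hZ hcard hw
      have hZfin := base_finite' M hZ
      rcases Nat.eq_zero_or_pos n with hn | hn
      · exfalso
        have : Z \ X = ∅ := by
          rw [← Set.ncard_eq_zero (hZfin.diff)]
          omega
        have : Z = X := hZ.eq_of_subset_isBase hX (diff_eq_empty.1 this)
        rw [this] at hw; exact lt_irrefl _ hw
      · have hne : (Z \ X).Nonempty := by
          rw [Set.nonempty_iff_ne_empty]
          intro h
          rw [h, Set.ncard_empty] at hcard; omega
        obtain ⟨e, heZX⟩ := hne
        obtain ⟨f, hfXZ, hZ', hX'⟩ := base_symm_exchange M hZ hX heZX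
        have he : e ∈ Z := heZX.1
        have heX : e ∉ X := heZX.2
        have hfX : f ∈ X := hfXZ.1
        have hfZ : f ∉ Z := hfXZ.2
        have hwX' : setWeight w (insert e (X \ {f})) = setWeight w X - w f + w e :=
          setWeight_swap w hXfin hfX heX
        rcases lt_or_ge (w e) (w f) with hlt | hle
        · exact ⟨f, hfX, e, heX, hX', by rw [hwX']; linarith⟩
        · have hwZ' : setWeight w (insert f (Z \ {e})) = setWeight w Z - w e + w f :=
            setWeight_swap w hZfin he hfZ
          have hdiff : insert f (Z \ {e}) \ X = (Z \ X) \ {e} := by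
            ext x
            simp only [Set.mem_diff, Set.mem_insert_iff, Set.mem_singleton_iff]
            constructor
            · rintro ⟨rfl | ⟨hxZ, hxe⟩, hxX⟩
              · exact absurd hfX hxX
              · exact ⟨⟨hxZ, hxX⟩, hxe⟩
            · rintro ⟨⟨hxZ, hxX⟩, hxe⟩
              exact ⟨Or.inr ⟨hxZ, hxe⟩, hxX⟩
          have hcard' : (insert f (Z \ {e}) \ X).ncard = n - 1 := by
            rw [hdiff, Set.ncard_diff_singleton_of_mem heZX, hcard]
          exact ih (n - 1) (by omega) _ hZ' hcard' (by rw [hwZ']; linarith)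
  exact main _ Z hZ rfl hw

/-- minimum weight of a base using at most `t` elements outside `E₀`. -/
noncomputable def gLB (M : Matroid α) (w : α → ℝ) (E₀ : Set α) (t : ℕ) : ℝ :=
  sInf {x : ℝ | ∃ X, (M.IsBase X ∧ (X \ E₀).ncard ≤ t) ∧ setWeight w X = x}

section gLBlemmas

variable (M : Matroid α) [M.Finite] (w : α → ℝ) (E₀ : Set α)

lemma gLB_spec (hbase : ∃ B, M.IsBase B ∧ B ⊆ E₀) (t : ℕ) :
    (∃ X, (M.IsBase X ∧ (X \ E₀).ncard ≤ t) ∧ setWeight w X = gLB M w E₀ t) ∧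
    (∀ Y, M.IsBase Y → (Y \ E₀).ncard ≤ t → gLB M w E₀ t ≤ setWeight w Y) := by
  obtain ⟨B, hB, hBE₀⟩ := hbase
  have hne : ∃ X, M.IsBase X ∧ (X \ E₀).ncard ≤ t :=
    ⟨B, hB, by rw [diff_eq_empty.2 hBE₀]; simp⟩
  have := weight_sInf_attained M w (fun X => M.IsBase X ∧ (X \ E₀).ncard ≤ t)
    (fun X hX => hX.1.subset_ground) hne
  exact ⟨this.1, fun Y h1 h2 => this.2 Y ⟨h1, h2⟩⟩

lemma wstar_spec (hbase : ∃ B, M.IsBase B ∧ B ⊆ E₀) :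
    (∃ Y, M.IsBase Y ∧ setWeight w Y = sInf {x : ℝ | ∃ Y, M.IsBase Y ∧ setWeight w Y = x}) ∧
    (∀ Y, M.IsBase Y → sInf {x : ℝ | ∃ Y, M.IsBase Y ∧ setWeight w Y = x} ≤ setWeight w Y) := by
  obtain ⟨B, hB, -⟩ := hbase
  exact weight_sInf_attained M w M.IsBase (fun X hX => hX.subset_ground) ⟨B, hB⟩

lemma gLB_anti (hbase : ∃ B, M.IsBase B ∧ B ⊆ E₀) {s t : ℕ} (hst : s ≤ t) :
    gLB M w E₀ t ≤ gLB M w E₀ s := by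
  obtain ⟨⟨X, ⟨hX, hXc⟩, hXw⟩, -⟩ := gLB_spec M w E₀ hbase s
  rw [← hXw]
  exact (gLB_spec M w E₀ hbase t).2 X hX (hXc.trans hst)

lemma wstar_le_gLB (hbase : ∃ B, M.IsBase B ∧ B ⊆ E₀) (t : ℕ) :
    sInf {x : ℝ | ∃ Y, M.IsBase Y ∧ setWeight w Y = x} ≤ gLB M w E₀ t := by
  obtain ⟨⟨X, ⟨hX, -⟩, hXw⟩, -⟩ := gLB_spec M w E₀ hbase t
  rw [← hXw]
  exact (wstar_spec M w E₀ hbase).2 X hX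

/-- Strict decrease while above the optimum. -/
lemma gLB_strict_decrease (hbase : ∃ B, M.IsBase B ∧ B ⊆ E₀) {i : ℕ}
    (h : sInf {x : ℝ | ∃ Y, M.IsBase Y ∧ setWeight w Y = x} < gLB M w E₀ i) :
    gLB M w E₀ (i + 1) < gLB M w E₀ i := by
  obtain ⟨⟨X, ⟨hX, hXc⟩, hXw⟩, -⟩ := gLB_spec M w E₀ hbase i
  obtain ⟨⟨Z, hZ, hZw⟩, -⟩ := wstar_spec M w E₀ hbase
  have hZX : setWeight w Z < setWeight w X := by rw [hZw, hXw]; exact h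
  obtain ⟨e, heX, f, hfX, hX', hw'⟩ := exists_improving_swap M w hX hZ hZX
  have hcard : (insert f (X \ {e}) \ E₀).ncard ≤ i + 1 := by
    have hsub : insert f (X \ {e}) \ E₀ ⊆ insert f (X \ E₀) := by
      intro x hx
      rcases hx.1 with rfl | hx'
      · exact mem_insert _ _
      · exact Or.inr ⟨hx'.1, hx.2⟩
    calc (insert f (X \ {e}) \ E₀).ncard ≤ (insert f (X \ E₀)).ncard :=
          Set.ncard_le_ncard hsub (((base_finite' M hX).diff).insert f)
      _ ≤ (X \ E₀).ncard + 1 := Set.ncard_insert_le _ _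
      _ ≤ i + 1 := by omega
  calc gLB M w E₀ (i + 1) ≤ setWeight w (insert f (X \ {e})) :=
        (gLB_spec M w E₀ hbase (i + 1)).2 _ hX' hcard
    _ < setWeight w X := hw'
    _ = gLB M w E₀ i := hXw

lemma minBasisWeight_spec (hbase : ∃ B, M.IsBase B ∧ B ⊆ E₀) (A : Set α) :
    (∃ X, (M.IsBase X ∧ X ⊆ E₀ ∪ A) ∧ setWeight w X = minBasisWeight M w E₀ A) ∧
    (∀ Y, M.IsBase Y → Y ⊆ E₀ ∪ A → minBasisWeight M w E₀ A ≤ setWeight w Y) := by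
  obtain ⟨B, hB, hBE₀⟩ := hbase
  have hset : {r : ℝ | ∃ X, M.IsBase X ∧ X ⊆ E₀ ∪ A ∧ setWeight w X = r} =
      {r : ℝ | ∃ X, (M.IsBase X ∧ X ⊆ E₀ ∪ A) ∧ setWeight w X = r} := by
    ext x; simp [and_assoc]
  have := weight_sInf_attained M w (fun X => M.IsBase X ∧ X ⊆ E₀ ∪ A)
    (fun X hX => hX.1.subset_ground) ⟨B, hB, hBE₀.trans subset_union_left⟩
  rw [minBasisWeight, hset]
  exact ⟨this.1, fun Y h1 h2 => this.2 Y ⟨h1, h2⟩⟩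

lemma stage_spec (hbase : ∃ B, M.IsBase B ∧ B ⊆ E₀) {t : ℕ} (ht : t ≤ (M.E \ E₀).ncard) :
    (∃ A, (A ⊆ M.E \ E₀ ∧ A.ncard = t) ∧ minBasisWeight M w E₀ A = stageLowerBound M w E₀ t) ∧
    (∀ A, A ⊆ M.E \ E₀ → A.ncard = t → stageLowerBound M w E₀ t ≤ minBasisWeight M w E₀ A) := by
  set S : Set (Set α) := {A | A ⊆ M.E \ E₀ ∧ A.ncard = t} with hS
  have hset : {r : ℝ | ∃ A, A ⊆ M.E \ E₀ ∧ A.ncard = t ∧ minBasisWeight M w E₀ A = r} =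
      (minBasisWeight M w E₀) '' S := by
    ext x; simp [hS, Set.image, and_assoc, eq_comm]
  have hfin : ((minBasisWeight M w E₀) '' S).Finite :=
    ((M.ground_finite.finite_subsets).subset
      (fun A hA => hA.1.trans diff_subset)).image _
  have hSne : S.Nonempty := by
    obtain ⟨A, hA1, hA2⟩ := Set.exists_subset_card_eq ht
    exact ⟨A, hA1, hA2⟩
  have hne : ((minBasisWeight M w E₀) '' S).Nonempty := hSne.image _
  rw [stageLowerBound, hset]
  constructor
  · obtain ⟨A, hA, hAe⟩ := hne.csInf_mem hfin
    exact ⟨A, hA, hAe⟩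
  · intro A h1 h2
    exact csInf_le hfin.bddBelow ⟨A, ⟨h1, h2⟩, rfl⟩

lemma stage_eq_gLB (hE₀ : E₀ ⊆ M.E) (hbase : ∃ B, M.IsBase B ∧ B ⊆ E₀) {t : ℕ}
    (ht : t ≤ (M.E \ E₀).ncard) :
    stageLowerBound M w E₀ t = gLB M w E₀ t := by
  apply le_antisymm
  · obtain ⟨⟨X, ⟨hX, hXc⟩, hXw⟩, -⟩ := gLB_spec M w E₀ hbase t
    have hXE : X \ E₀ ⊆ M.E \ E₀ := diff_subset_diff_left hX.subset_ground
    obtain ⟨A, hA1, hA2, hA3⟩ := Set.exists_subsuperset_card_eq hXE hXc ht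
    have h1 : stageLowerBound M w E₀ t ≤ minBasisWeight M w E₀ A :=
      (stage_spec M w E₀ hbase ht).2 A hA2 hA3
    have h2 : minBasisWeight M w E₀ A ≤ setWeight w X := by
      apply (minBasisWeight_spec M w E₀ hbase A).2 X hX
      intro x hx
      by_cases hxE : x ∈ E₀
      · exact Or.inl hxE
      · exact Or.inr (hA1 ⟨hx, hxE⟩)
    rw [← hXw]; exact h1.trans h2
  · obtain ⟨⟨A, ⟨hA1, hA2⟩, hA3⟩, -⟩ := stage_spec M w E₀ hbase ht
    obtain ⟨⟨X, ⟨hX, hXsub⟩, hXw⟩, -⟩ := minBasisWeight_spec M w E₀ hbase A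
    have hXc : (X \ E₀).ncard ≤ t := by
      have hsub : X \ E₀ ⊆ A := fun x hx => ((hXsub hx.1).resolve_left hx.2)
      rw [← hA2]
      exact Set.ncard_le_ncard hsub (M.ground_finite.subset (hA1.trans diff_subset))
    rw [← hA3, ← hXw]
    exact (gLB_spec M w E₀ hbase t).2 X hX hXc

end gLBlemmas

/-- The sequence `(F_t)` is strictly decreasing until it reaches the minimum weight
`w*` of a basis of `M` and is constant afterwards: there is `t ≤ min (rk M) T` with
`F_0 > F_1 > ⋯ > F_t = F_{t+1} = ⋯ = F_T` and `F_T = w*`. -/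
theorem stage_lower_bounds_decrease_then_constant (M : Matroid α) [M.Finite]
    (w : α → ℝ) (E₀ : Set α) (hE₀ : E₀ ⊆ M.E) (hbase : ∃ B, M.IsBase B ∧ B ⊆ E₀)
    (r : ℕ) (hrk : ∀ B, M.IsBase B → B.ncard = r) :
    ∃ t ≤ min r ((M.E \ E₀).ncard),
      (∀ i, i < t → stageLowerBound M w E₀ (i + 1) < stageLowerBound M w E₀ i) ∧
      (∀ i, t ≤ i → i ≤ (M.E \ E₀).ncard →
        stageLowerBound M w E₀ i = stageLowerBound M w E₀ t) ∧
      stageLowerBound M w E₀ ((M.E \ E₀).ncard) =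
        sInf {x : ℝ | ∃ Y, M.IsBase Y ∧ setWeight w Y = x} := by
  set wstar := sInf {x : ℝ | ∃ Y, M.IsBase Y ∧ setWeight w Y = x} with hwstar
  set T := (M.E \ E₀).ncard with hT
  obtain ⟨⟨Y, hY, hYw⟩, hwlb⟩ := wstar_spec M w E₀ hbase
  set s := (Y \ E₀).ncard with hs
  have hYfin : Y.Finite := base_finite' M hY
  have hsr : s ≤ r := by
    rw [hs, ← hrk Y hY]
    exact Set.ncard_le_ncard diff_subset hYfin
  have hsT : s ≤ T := by
    rw [hs, hT]
    exact Set.ncard_le_ncard (diff_subset_diff_left hY.subset_ground)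
      (M.ground_finite.diff)
  have hgs : gLB M w E₀ s = wstar := by
    apply le_antisymm
    · rw [hwstar, ← hYw]
      exact (gLB_spec M w E₀ hbase s).2 Y hY le_rfl
    · exact wstar_le_gLB M w E₀ hbase s
  set t := sInf {n : ℕ | gLB M w E₀ n = wstar} with ht
  have hts : t ≤ s := Nat.sInf_le hgs
  have htmem : gLB M w E₀ t = wstar := by
    have : t ∈ {n : ℕ | gLB M w E₀ n = wstar} :=
      Nat.sInf_mem (⟨s, hgs⟩ : {n : ℕ | gLB M w E₀ n = wstar}.Nonempty)
    exact this
  have hgconst : ∀ i, t ≤ i → gLB M w E₀ i = wstar := by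
    intro i hi
    apply le_antisymm
    · rw [← htmem]
      exact gLB_anti M w E₀ hbase hi
    · exact wstar_le_gLB M w E₀ hbase i
  refine ⟨t, le_min (hts.trans hsr) (hts.trans hsT), ?_, ?_, ?_⟩
  · intro i hi
    have hi1 : i + 1 ≤ T := by omega
    rw [stage_eq_gLB M w E₀ hE₀ hbase hi1, stage_eq_gLB M w E₀ hE₀ hbase (by omega : i ≤ T)]
    apply gLB_strict_decrease M w E₀ hbase
    have hne : gLB M w E₀ i ≠ wstar := by
      intro h
      have : t ≤ i := Nat.sInf_le (show i ∈ {n : ℕ | gLB M w E₀ n = wstar} from h)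
      omega
    exact lt_of_le_of_ne (wstar_le_gLB M w E₀ hbase i) (Ne.symm hne)
  · intro i hti hiT
    rw [stage_eq_gLB M w E₀ hE₀ hbase hiT, stage_eq_gLB M w E₀ hE₀ hbase (hts.trans hsT),
      hgconst i hti, htmem]
  · rw [stage_eq_gLB M w E₀ hE₀ hbase le_rfl, hgconst T (hts.trans hsT)]
end
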